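/- Let π be a graphic sequence with n terms in which each term is at most n/24 and such that π + 1 is graphic, and let (G, I) and (G, J) be two Kundu realizations of π + 1 with the same underlying realization G of π (the perfect matchings I and J need not be edge-disjoint). Then there exists a finite sequence of K-swaps transforming (G ∪ I, displayed 1-factor I) into (G ∪ J, displayed 1-factor J) such that at every intermediate step the non-matching part of the realization equals G (i.e. G does not change at any step of the process; only the displayed perfect matching changes). -/

import Mathlib

open scoped Classical

/-- The degree of vertex `v` in the simple graph `G`. -/
noncomputable def deg {V : Type*} [Fintype V] (G : SimpleGraph V) (v : V) : ℕ :=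
  (Finset.univ.filter fun w => G.Adj v w).card

/-- A sequence `π` is graphic if some simple graph realizes it degree-wise. -/
def IsGraphic {n : ℕ} (π : Fin n → ℕ) : Prop :=
  ∃ G : SimpleGraph (Fin n), ∀ i, deg G i = π i

/-- A swap operation on a simple graph `H`: the edges `ab, cd ∈ E(H)` (with `a,b,c,d`
distinct) are replaced by the two non-edges `bc, ad ∉ E(H)`, producing `H'`. -/
def SwapStep {V : Type*} (H H' : SimpleGraph V) (a b c d : V) : Prop :=
  a ≠ b ∧ a ≠ c ∧ a ≠ d ∧ b ≠ c ∧ b ≠ d ∧ c ≠ d ∧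
  H.Adj a b ∧ H.Adj c d ∧ ¬ H.Adj b c ∧ ¬ H.Adj a d ∧
  H'.edgeSet = (H.edgeSet \ {s(a, b), s(c, d)}) ∪ {s(b, c), s(a, d)}

/-- A Kundu-restricted swap (K-swap) on a pair `p = (G, I)` (standing for the graph
`G ∪ I` with displayed 1-factor `I`): a swap `ab, cd ⇒ bc, ad` on `G ∪ I` such that
either both `ab, cd ∈ I` (and the new displayed 1-factor is `(I \ {ab,cd}) ∪ {bc,ad}`,
while `G` is unchanged), or both `ab, cd ∉ I` (and the displayed 1-factor is unchanged,
while the swap is performed inside `G`). -/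
def KSwap {V : Type*} (p q : SimpleGraph V × SimpleGraph V) : Prop :=
  ∃ a b c d : V, SwapStep (p.1 ⊔ p.2) (q.1 ⊔ q.2) a b c d ∧
    ((p.2.Adj a b ∧ p.2.Adj c d ∧ q.1 = p.1 ∧
        q.2.edgeSet = (p.2.edgeSet \ {s(a, b), s(c, d)}) ∪ {s(b, c), s(a, d)}) ∨
     (¬ p.2.Adj a b ∧ ¬ p.2.Adj c d ∧ q.2 = p.2 ∧
        q.1.edgeSet = (p.1.edgeSet \ {s(a, b), s(c, d)}) ∪ {s(b, c), s(a, d)}))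

/-- `(G, I)` is a Kundu realization of `π + 1`: `G` realizes `π`, the displayed graph `I`
is a perfect matching (realizes the all-ones sequence), and `G` and `I` are edge-disjoint. -/
def KunduState {n : ℕ} (π : Fin n → ℕ) (p : SimpleGraph (Fin n) × SimpleGraph (Fin n)) :
    Prop :=
  (∀ i, deg p.1 i = π i) ∧ (∀ v, deg p.2 v = 1) ∧ Disjoint p.1 p.2

/-!
Encode a perfect matching by its mate function, a fixed-point-free involution, and induct on the
number of vertices at which the mate functions `μ` of `I` and `ν` of `J` differ. Let `u` be such
a vertex, `v = ν u`, `u' = μ u`, `v' = μ v`. The K-swap `u u', v v' ⇒ u v, u' v'` repairs `u` and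
`v` without spoiling anything, unless `u' v'` is an edge of `G`. In that case take an `I`-edge
`x y` avoiding the neighbourhoods of `u, u', v', w` (with `v'' = ν v'`, `w = μ v''`); since every
degree is at most `n / 24` such an edge exists. The three K-swaps `u u', x y ⇒ u y, u' x`, then
`u y, v v' ⇒ u v, y v'`, then `y v', v'' w ⇒ v' v'', y w` repair `u, v, v', v''` and spoil at
most `x, y`.
-/

open Finset Function Relation

variable {V : Type*}

def IsMateFun (I : SimpleGraph V) (μ : V → V) : Prop :=
  ∀ v w, I.Adj v w ↔ w = μ v

namespace IsMateFun

variable {G I J : SimpleGraph V} {μ : V → V}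

lemma adj (h : IsMateFun I μ) (v : V) : I.Adj v (μ v) := (h v (μ v)).2 rfl

lemma involutive (h : IsMateFun I μ) : Involutive μ :=
  fun v => ((h (μ v) v).1 (h.adj v).symm).symm

lemma apply_ne (h : IsMateFun I μ) (v : V) : μ v ≠ v := fun he => (h.adj v).ne he.symm

lemma unique (hI : IsMateFun I μ) (hJ : IsMateFun J μ) : I = J := by
  ext v w
  rw [hI, hJ]

lemma disjoint_iff (h : IsMateFun I μ) : Disjoint G I ↔ ∀ v, ¬ G.Adj v (μ v) := by
  rw [← SimpleGraph.disjoint_edgeSet, Set.disjoint_right]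
  constructor
  · exact fun hd v hG => hd (show s(v, μ v) ∈ I.edgeSet from h.adj v) hG
  · intro hd e
    induction e using Sym2.ind with
    | _ v w => rintro hI hG; exact hd v ((h v w).1 hI ▸ hG)

lemma deg_eq_one [Fintype V] (h : IsMateFun I μ) (v : V) : deg I v = 1 :=
  card_eq_one.mpr ⟨μ v, by ext w; simp [h v w]⟩

end IsMateFun

lemma exists_isMateFun_of_deg_eq_one [Fintype V] {I : SimpleGraph V} (h : ∀ v, deg I v = 1) :
    ∃ μ, IsMateFun I μ := by
  choose μ hμ using fun v => card_eq_one.mp (h v)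
  refine ⟨μ, fun v w => ?_⟩
  simpa using congrArg (w ∈ ·) (hμ v)

def mateGraph (μ : V → V) : SimpleGraph V := SimpleGraph.fromRel fun v w => w = μ v

lemma isMateFun_mateGraph {μ : V → V} (hinv : Involutive μ) (hne : ∀ v, μ v ≠ v) :
    IsMateFun (mateGraph μ) μ := by
  intro v w
  simp only [mateGraph, SimpleGraph.fromRel_adj]
  constructor
  · rintro ⟨-, h | h⟩
    · exact h
    · rw [h, hinv]
  · rintro rfl
    exact ⟨(hne v).symm, Or.inl rfl⟩

/-- Conjugating `μ` by the transposition `(a c)` trades the matching edges `a (μ a)`,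
`c (μ c)` for `(μ a) c`, `a (μ c)`. -/
noncomputable def swapMate (μ : V → V) (a c : V) : V → V := Equiv.swap a c ∘ μ ∘ Equiv.swap a c

section swapMate

variable {μ : V → V} {a c v : V}

lemma involutive_swapMate (hinv : Involutive μ) : Involutive (swapMate μ a c) := by
  intro v
  simp [swapMate, hinv _]

lemma swapMate_apply_ne (hne : ∀ v, μ v ≠ v) : swapMate μ a c v ≠ v := by
  intro h
  apply hne (Equiv.swap a c v)
  simpa [swapMate, Equiv.swap_apply_eq_iff] using h

lemma swapMate_apply_of_ne (hinv : Involutive μ) (ha : v ≠ a) (hma : v ≠ μ a) (hc : v ≠ c)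
    (hmc : v ≠ μ c) : swapMate μ a c v = μ v := by
  have hva : μ v ≠ a := fun h => hma (by rw [← h, hinv])
  have hvc : μ v ≠ c := fun h => hmc (by rw [← h, hinv])
  simp [swapMate, Equiv.swap_apply_of_ne_of_ne, ha, hc, hva, hvc]

lemma swapMate_apply_mate_left (hinv : Involutive μ) (hne : ∀ v, μ v ≠ v) (h : μ a ≠ c) :
    swapMate μ a c (μ a) = c := by
  simp [swapMate, Equiv.swap_apply_of_ne_of_ne (hne a) h, hinv a]

lemma swapMate_apply_mate_right (hinv : Involutive μ) (hne : ∀ v, μ v ≠ v) (h : μ c ≠ a) :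
    swapMate μ a c (μ c) = a := by
  simp [swapMate, Equiv.swap_apply_of_ne_of_ne h (hne c), hinv c]

lemma swapMate_apply_left (hne : ∀ v, μ v ≠ v) (h : μ c ≠ a) : swapMate μ a c a = μ c := by
  simp [swapMate, Equiv.swap_apply_of_ne_of_ne h (hne c)]

lemma swapMate_apply_right (hne : ∀ v, μ v ≠ v) (h : μ a ≠ c) : swapMate μ a c c = μ a := by
  simp [swapMate, Equiv.swap_apply_of_ne_of_ne (hne a) h]

lemma eq_swapMate_iff (hinv : Involutive μ) (hne : ∀ v, μ v ≠ v) (hac : a ≠ c) (hca : c ≠ μ a)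
    {w : V} :
    w = swapMate μ a c v ↔
      (w = μ v ∧ s(v, w) ≠ s(a, μ a) ∧ s(v, w) ≠ s(c, μ c)) ∨
        s(v, w) = s(μ a, c) ∨ s(v, w) = s(a, μ c) := by
  have := hinv a; have := hinv c; have := hinv v; have := hne a; have := hne c; have := hne v
  simp only [swapMate, comp_apply, Equiv.swap_apply_def, Sym2.eq_iff]
  grind

end swapMate

lemma isMateFun_mateGraph_swapMate {I : SimpleGraph V} {μ : V → V} (hμ : IsMateFun I μ) (a c : V) :
    IsMateFun (mateGraph (swapMate μ a c)) (swapMate μ a c) :=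
  isMateFun_mateGraph (involutive_swapMate hμ.involutive) fun _ => swapMate_apply_ne hμ.apply_ne

lemma edgeSet_mateGraph_swapMate {I : SimpleGraph V} {μ : V → V} {a c : V} (hμ : IsMateFun I μ)
    (hac : a ≠ c) (hca : c ≠ μ a) :
    (mateGraph (swapMate μ a c)).edgeSet =
      (I.edgeSet \ {s(a, μ a), s(c, μ c)}) ∪ {s(μ a, c), s(a, μ c)} := by
  have hM := isMateFun_mateGraph_swapMate hμ a c
  ext e
  induction e using Sym2.ind with
  | _ v w =>
    rw [SimpleGraph.mem_edgeSet, hM v w, eq_swapMate_iff hμ.involutive hμ.apply_ne hac hca]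
    simp only [Set.mem_union, Set.mem_sdiff, SimpleGraph.mem_edgeSet, hμ v w, Set.mem_insert_iff,
      Set.mem_singleton_iff]
    tauto

def MatchingKSwap [Fintype V] (G I I' : SimpleGraph V) : Prop :=
  KSwap (G, I) (G, I') ∧ (∀ v, deg I' v = 1) ∧ Disjoint G I'

lemma matchingKSwap_mateGraph_swapMate [Fintype V] {G I : SimpleGraph V} {μ : V → V} {a c : V}
    (hμ : IsMateFun I μ) (hGI : Disjoint G I) (hac : a ≠ c) (hca : c ≠ μ a)
    (hbc : ¬ G.Adj (μ a) c) (had : ¬ G.Adj a (μ c)) :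
    MatchingKSwap G I (mateGraph (swapMate μ a c)) := by
  have hinv := hμ.involutive
  have hM := isMateFun_mateGraph_swapMate hμ a c
  have hE := edgeSet_mateGraph_swapMate hμ hac hca
  have hGa : s(a, μ a) ∉ G.edgeSet := (hμ.disjoint_iff.1 hGI a)
  have hGc : s(c, μ c) ∉ G.edgeSet := (hμ.disjoint_iff.1 hGI c)
  have hIbc : ¬ I.Adj (μ a) c := by rw [hμ, hinv]; exact hac.symm
  have hIad : ¬ I.Adj a (μ c) := by rw [hμ]; exact fun h => hac (hinv.injective h).symm
  refine ⟨⟨a, μ a, c, μ c, ?_, Or.inl ⟨hμ.adj a, hμ.adj c, rfl, hE⟩⟩, hM.deg_eq_one, ?_⟩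
  · refine ⟨(hμ.apply_ne a).symm, hac, fun h => hca (by rw [h, hinv]), hca.symm,
      fun h => hac (hinv.injective h), (hμ.apply_ne c).symm, Or.inr (hμ.adj a),
      Or.inr (hμ.adj c), fun h => h.elim hbc hIbc, fun h => h.elim had hIad, ?_⟩
    rw [SimpleGraph.edgeSet_sup, SimpleGraph.edgeSet_sup, hE]
    ext e
    simp only [Set.mem_union, Set.mem_sdiff, Set.mem_insert_iff, Set.mem_singleton_iff]
    constructor
    · rintro (hG | ⟨hI, hne⟩ | hnew)
      · exact Or.inl ⟨Or.inl hG, by rintro (rfl | rfl) <;> contradiction⟩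
      · exact Or.inl ⟨Or.inr hI, hne⟩
      · exact Or.inr hnew
    · tauto
  · rw [hM.disjoint_iff]
    intro v hv
    rcases (eq_swapMate_iff hinv hμ.apply_ne hac hca).1 rfl with ⟨h, -⟩ | h | h
    · exact hμ.disjoint_iff.1 hGI v (h ▸ hv)
    · exact hbc (show s(μ a, c) ∈ G.edgeSet from h ▸ hv)
    · exact had (show s(a, μ c) ∈ G.edgeSet from h ▸ hv)

section disagreeSet

variable [Fintype V]

noncomputable def disagreeSet (μ ν : V → V) : Finset V := univ.filter fun z => μ z ≠ ν z

variable {μ ν : V → V}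

@[simp]
lemma mem_disagreeSet {z : V} : z ∈ disagreeSet μ ν ↔ μ z ≠ ν z := by simp [disagreeSet]

lemma disagreeSet_eq_empty : disagreeSet μ ν = ∅ ↔ μ = ν := by
  simp [Finset.eq_empty_iff_forall_notMem, funext_iff]

lemma disagreeSet_swapMate_subset (hinv : Involutive μ) (a c : V) :
    disagreeSet (swapMate μ a c) ν ⊆ disagreeSet μ ν ∪ {a, μ a, c, μ c} := by
  intro z hz
  by_cases hzs : z ∈ ({a, μ a, c, μ c} : Finset V)
  · exact mem_union_right _ hzs
  · simp only [mem_insert, mem_singleton, not_or] at hzs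
    obtain ⟨ha, hma, hc, hmc⟩ := hzs
    rw [mem_disagreeSet, swapMate_apply_of_ne hinv ha hma hc hmc] at hz
    exact mem_union_left _ (mem_disagreeSet.2 hz)

lemma card_disagreeSet_swapMate_le (hμ : Involutive μ) (hν : Involutive ν) {a : V}
    (ha : μ a ≠ ν a) (c : V) :
    (disagreeSet (swapMate μ a c) ν).card ≤ (disagreeSet μ ν).card + 2 := by
  have hma : μ (μ a) ≠ ν (μ a) := by
    rw [hμ]
    exact fun h => ha ((congrArg ν h).trans (hν _)).symm
  have hsub : disagreeSet (swapMate μ a c) ν ⊆ disagreeSet μ ν ∪ {c, μ c} := by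
    intro z hz
    have := disagreeSet_swapMate_subset hμ a c hz
    simp only [mem_union, mem_insert, mem_singleton, mem_disagreeSet] at this ⊢
    rcases this with h | rfl | rfl | h <;> tauto
  calc _ ≤ (disagreeSet μ ν ∪ {c, μ c}).card := card_le_card hsub
    _ ≤ _ := (card_union_le _ _).trans (by grw [card_le_two])

lemma card_disagreeSet_swapMate_mate_add_two_le (hμ : Involutive μ) (hμne : ∀ v, μ v ≠ v)
    (hν : Involutive ν) (hνne : ∀ v, ν v ≠ v) {u : V} (hu : μ u ≠ ν u) :
    (disagreeSet (swapMate μ (μ u) (ν u)) ν).card + 2 ≤ (disagreeSet μ ν).card := by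
  have hmu : μ (μ u) = u := hμ u
  have hfix_u : swapMate μ (μ u) (ν u) u = ν u := by
    simpa [hmu] using swapMate_apply_mate_left hμ hμne (a := μ u) (c := ν u)
      (by rw [hmu]; exact (hνne u).symm)
  have hfix_v : swapMate μ (μ u) (ν u) (ν u) = ν (ν u) := by
    rw [swapMate_apply_right hμne (by rw [hmu]; exact (hνne u).symm), hmu, hν u]
  have hmu_mem : μ u ∈ disagreeSet μ ν := by
    rw [mem_disagreeSet, hmu]
    exact fun h => hu ((congrArg ν h).trans (hν _)).symm
  have hmv_mem : μ (ν u) ∈ disagreeSet μ ν := by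
    rw [mem_disagreeSet, hμ]
    exact fun h => hu ((congrArg μ (hν.injective h)).trans (hμ _))
  have hpair : ({u, ν u} : Finset V) ⊆ disagreeSet μ ν := by
    rw [insert_subset_iff, singleton_subset_iff, mem_disagreeSet, mem_disagreeSet, hν]
    exact ⟨hu, fun h => hu ((hμ _).symm.trans (congrArg μ h)).symm⟩
  have hsub : disagreeSet (swapMate μ (μ u) (ν u)) ν ⊆ disagreeSet μ ν \ {u, ν u} := by
    intro z hz
    have hzu : z ≠ u := by rintro rfl; exact mem_disagreeSet.1 hz hfix_u
    have hzv : z ≠ ν u := by rintro rfl; exact mem_disagreeSet.1 hz hfix_v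
    have := disagreeSet_swapMate_subset hμ (ν := ν) (μ u) (ν u) hz
    simp only [mem_union, mem_insert, mem_singleton, hmu, hzu, hzv, false_or] at this
    rw [mem_sdiff, mem_insert, mem_singleton]
    refine ⟨?_, by tauto⟩
    rcases this with h | rfl | rfl
    exacts [h, hmu_mem, hmv_mem]
  have h1 := card_le_card hsub
  have h2 := card_le_card hpair
  rw [card_sdiff_of_subset hpair] at h1
  rw [card_pair (hνne u).symm] at h1 h2
  omega

end disagreeSet

lemma exists_notMem_and_apply_notMem [Fintype V] {μ : V → V} (hinv : Involutive μ)
    (B : Finset V) (h : 2 * B.card < Fintype.card V) : ∃ x, x ∉ B ∧ μ x ∉ B := by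
  have hcard : (B ∪ B.image μ).card < (univ : Finset V).card := by
    have := card_union_le B (B.image μ)
    have := card_image_le (s := B) (f := μ)
    rw [card_univ]
    omega
  obtain ⟨x, -, hx⟩ := exists_mem_notMem_of_card_lt_card hcard
  simp only [mem_union, mem_image, not_or, not_exists, not_and] at hx
  exact ⟨x, hx.1, fun h => hx.2 _ h (hinv x)⟩

section Progress

variable [Fintype V] {G I J : SimpleGraph V} {μ ν : V → V}

lemma matchingKSwap_swapMate_mate (hμ : IsMateFun I μ) (hν : IsMateFun J ν) (hGI : Disjoint G I)
    (hGJ : Disjoint G J) {u : V} (hu : μ u ≠ ν u) (hfree : ¬ G.Adj (μ u) (μ (ν u))) :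
    MatchingKSwap G I (mateGraph (swapMate μ (μ u) (ν u))) := by
  refine matchingKSwap_mateGraph_swapMate hμ hGI hu ?_ ?_ hfree <;> rw [hμ.involutive]
  exacts [hν.apply_ne u, hν.disjoint_iff.1 hGJ u]

lemma exists_progress_of_detour (hμ : IsMateFun I μ) (hν : IsMateFun J ν) (hGI : Disjoint G I)
    (hGJ : Disjoint G J) {u v v' x : V} (hu : μ u ≠ ν u) (hv : ν u = v) (hv' : μ v = v')
    (hadj : G.Adj (μ u) v') (hx : x ∉ ({u, μ u, v, ν v'} : Finset V))
    (hy : μ x ∉ ({u, μ u, v, ν v'} : Finset V)) (hGu'x : ¬ G.Adj (μ u) x) (hGuy : ¬ G.Adj u (μ x))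
    (hGyv' : ¬ G.Adj (μ x) v') (hGyw : ¬ G.Adj (μ x) (μ (ν v'))) :
    ∃ I' μ', IsMateFun I' μ' ∧ Disjoint G I' ∧ ReflTransGen (MatchingKSwap G) I I' ∧
      (disagreeSet μ' ν).card < (disagreeSet μ ν).card := by
  have hinv := hμ.involutive
  have hνinv := hν.involutive
  simp only [mem_insert, mem_singleton, not_or] at hx hy
  obtain ⟨hxu, hxu', hxv, hxv''⟩ := hx
  obtain ⟨hyu, hyu', hyv, hyv''⟩ := hy
  have hvu : v ≠ u := hv ▸ hν.apply_ne u
  have hv''u : ν v' ≠ u := fun h => hμ.apply_ne v (by rw [hv', ← hνinv v', h, hv])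
  have hv''u' : ν v' ≠ μ u := fun h => hν.disjoint_iff.1 hGJ v' (h ▸ hadj.symm)
  have hv''v : ν v' ≠ v := by
    have := hinv v; have := hνinv u; have := hνinv v'
    grind
  have hM₁ := isMateFun_mateGraph_swapMate hμ u x
  have hS₁ : MatchingKSwap G I (mateGraph (swapMate μ u x)) :=
    matchingKSwap_mateGraph_swapMate hμ hGI (Ne.symm hxu) hxu' hGu'x hGuy
  have hμ₁u : swapMate μ u x u = μ x := swapMate_apply_left hμ.apply_ne hyu
  have hμ₁v : swapMate μ u x v = v' := by
    rw [swapMate_apply_of_ne hinv hvu (hv ▸ hu).symm (Ne.symm hxv) (Ne.symm hyv), hv']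
  have hμ₁w : swapMate μ u x (ν v') = μ (ν v') :=
    swapMate_apply_of_ne hinv hv''u hv''u' (Ne.symm hxv'') (Ne.symm hyv'')
  have hu₁ : swapMate μ u x u ≠ ν u := by rw [hμ₁u, hv]; exact hyv
  have hS₂ := matchingKSwap_swapMate_mate hM₁ hν hS₁.2.2 hGJ hu₁ (by rwa [hμ₁u, hv, hμ₁v])
  have hc₂ := card_disagreeSet_swapMate_mate_add_two_le hM₁.involutive hM₁.apply_ne hνinv
    hν.apply_ne hu₁
  have hM₂ := isMateFun_mateGraph_swapMate hM₁ (μ x) v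
  rw [hμ₁u, hv] at hS₂ hc₂
  set μ₂ := swapMate (swapMate μ u x) (μ x) v
  have hμ₂v' : μ₂ v' = μ x := by
    rw [← hμ₁v]
    exact swapMate_apply_mate_right hM₁.involutive hM₁.apply_ne
      (by rw [hμ₁v, ← hv']; exact fun h => hxv (hinv.injective h).symm)
  have hμ₂w : μ₂ (ν v') = μ (ν v') := by
    rw [← hμ₁w]
    refine swapMate_apply_of_ne hM₁.involutive (Ne.symm hyv'') ?_ hv''v ?_
    · rw [← hμ₁u, hM₁.involutive]; exact hv''u
    · rw [hμ₁v]; exact hν.apply_ne v'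
  have hu₂ : μ₂ v' ≠ ν v' := by rw [hμ₂v']; exact hyv''
  have hS₃ := matchingKSwap_swapMate_mate hM₂ hν hS₂.2.2 hGJ hu₂ (by rwa [hμ₂v', hμ₂w])
  have hc₃ := card_disagreeSet_swapMate_mate_add_two_le hM₂.involutive hM₂.apply_ne hνinv
    hν.apply_ne hu₂
  have hc₁ := card_disagreeSet_swapMate_le hinv hνinv hu x
  exact ⟨_, _, isMateFun_mateGraph_swapMate hM₂ _ _, hS₃.2.2,
    .tail (.tail (.single hS₁) hS₂) hS₃, by omega⟩

lemma exists_progress_of_adj (hΔ : ∀ v, 24 * deg G v ≤ Fintype.card V) (hμ : IsMateFun I μ)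
    (hν : IsMateFun J ν) (hGI : Disjoint G I) (hGJ : Disjoint G J) {u : V} (hu : μ u ≠ ν u)
    (hadj : G.Adj (μ u) (μ (ν u))) :
    ∃ I' μ', IsMateFun I' μ' ∧ Disjoint G I' ∧ ReflTransGen (MatchingKSwap G) I I' ∧
      (disagreeSet μ' ν).card < (disagreeSet μ ν).card := by
  set v' := μ (ν u)
  let N z := univ.filter (G.Adj z)
  set B := ({u, μ u, ν u, ν v'} : Finset V) ∪ (N u ∪ N (μ u) ∪ N v' ∪ N (μ (ν v')))
  have hB : 2 * B.card < Fintype.card V := by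
    have hN : ∀ z, (N z).card = deg G z := fun _ => rfl
    have h₁ : 0 < deg G (μ u) := card_pos.2 ⟨v', by simpa using hadj⟩
    have h₂ : B.card ≤ _ := card_union_le _ _
    have h₃ := card_union_le (N u ∪ N (μ u) ∪ N v') (N (μ (ν v')))
    have h₄ := card_union_le (N u ∪ N (μ u)) (N v')
    have h₅ := card_union_le (N u) (N (μ u))
    have h₆ := card_le_four (a := u) (b := μ u) (c := ν u) (d := ν v')
    have := hΔ u; have := hΔ (μ u); have := hΔ v'; have := hΔ (μ (ν v'))
    simp only [hN] at h₃ h₄ h₅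
    omega
  obtain ⟨x, hx, hy⟩ := exists_notMem_and_apply_notMem hμ.involutive B hB
  simp only [B, N, mem_union, mem_filter, mem_univ, true_and, not_or] at hx hy
  obtain ⟨hxS, ⟨⟨-, hGu'x⟩, -⟩, -⟩ := hx
  obtain ⟨hyS, ⟨⟨hGuy, -⟩, hGv'y⟩, hGwy⟩ := hy
  exact exists_progress_of_detour hμ hν hGI hGJ hu rfl rfl hadj hxS hyS hGu'x hGuy
    (fun h => hGv'y h.symm) (fun h => hGwy h.symm)

lemma exists_progress (hΔ : ∀ v, 24 * deg G v ≤ Fintype.card V) (hμ : IsMateFun I μ)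
    (hν : IsMateFun J ν) (hGI : Disjoint G I) (hGJ : Disjoint G J) {u : V} (hu : μ u ≠ ν u) :
    ∃ I' μ', IsMateFun I' μ' ∧ Disjoint G I' ∧ ReflTransGen (MatchingKSwap G) I I' ∧
      (disagreeSet μ' ν).card < (disagreeSet μ ν).card := by
  by_cases hadj : G.Adj (μ u) (μ (ν u))
  · exact exists_progress_of_adj hΔ hμ hν hGI hGJ hu hadj
  · have hS := matchingKSwap_swapMate_mate hμ hν hGI hGJ hu hadj
    have hc := card_disagreeSet_swapMate_mate_add_two_le hμ.involutive hμ.apply_ne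
      hν.involutive hν.apply_ne hu
    exact ⟨_, _, isMateFun_mateGraph_swapMate hμ _ _, hS.2.2, .single hS, by omega⟩

theorem reflTransGen_matchingKSwap (hΔ : ∀ v, 24 * deg G v ≤ Fintype.card V)
    (hμ : IsMateFun I μ) (hν : IsMateFun J ν) (hGI : Disjoint G I) (hGJ : Disjoint G J) :
    ReflTransGen (MatchingKSwap G) I J := by
  induction hD : (disagreeSet μ ν).card using Nat.strong_induction_on generalizing I μ with
  | _ d ih =>
    obtain hempty | ⟨u, hu⟩ := (disagreeSet μ ν).eq_empty_or_nonempty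
    · rw [disagreeSet_eq_empty] at hempty
      subst hempty
      rw [hμ.unique hν]
    · obtain ⟨I', μ', hμ', hGI', hII', hlt⟩ :=
        exists_progress hΔ hμ hν hGI hGJ (mem_disagreeSet.1 hu)
      exact hII'.trans (ih _ (hD ▸ hlt) hμ' hGI' rfl)

end Progress

lemma exists_seq_of_reflTransGen {α : Type*} {r : α → α → Prop} {a b : α}
    (h : ReflTransGen r a b) :
    ∃ (m : ℕ) (f : ℕ → α), f 0 = a ∧ f m = b ∧ ∀ k < m, r (f k) (f (k + 1)) := by
  induction h with
  | refl => exact ⟨0, fun _ => a, rfl, rfl, by simp⟩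
  | @tail b c _ hbc ih =>
    obtain ⟨m, f, h0, hm, hf⟩ := ih
    refine ⟨m + 1, update f (m + 1) c, by simp [h0], by simp, fun k hk => ?_⟩
    rcases Nat.lt_succ_iff_lt_or_eq.1 hk with hk | rfl
    · rw [update_of_ne (by omega), update_of_ne (by omega)]
      exact hf k hk
    · rw [update_of_ne (by omega), update_self, hm]
      exact hbc

theorem kswap_sequence_fixed_G_general {n : ℕ} (π : Fin n → ℕ)
    (hΔ : ∀ i, 24 * π i ≤ n)
    (G I J : SimpleGraph (Fin n))
    (h₁ : KunduState π (G, I)) (h₂ : KunduState π (G, J)) :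
    ∃ (m : ℕ) (f : ℕ → SimpleGraph (Fin n) × SimpleGraph (Fin n)),
      f 0 = (G, I) ∧ f m = (G, J) ∧
      (∀ k < m, KSwap (f k) (f (k + 1))) ∧
      (∀ k ≤ m, KunduState π (f k)) ∧
      (∀ k ≤ m, (f k).1 = G) := by
  obtain ⟨μ, hμ⟩ := exists_isMateFun_of_deg_eq_one h₁.2.1
  obtain ⟨ν, hν⟩ := exists_isMateFun_of_deg_eq_one h₂.2.1
  have hΔG : ∀ v, 24 * deg G v ≤ Fintype.card (Fin n) := by simpa [h₁.1] using hΔ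
  obtain ⟨m, f, h0, hm, hf⟩ :=
    exists_seq_of_reflTransGen (reflTransGen_matchingKSwap hΔG hμ hν h₁.2.2 h₂.2.2)
  refine ⟨m, fun k => (G, f k), congrArg (Prod.mk G) h0, congrArg (Prod.mk G) hm,
    fun k hk => (hf k hk).1, ?_, fun _ _ => rfl⟩
  rintro (_ | k) hk
  · simpa [h0] using h₁
  · exact ⟨h₁.1, (hf k hk).2⟩

/-- Let `(G, I)` and `(G, J)` be two Kundu realizations of `π + 1` with the same underlying
realization `G` of `π` (the matchings `I` and `J` need not be edge-disjoint). Then there is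
a finite sequence of K-swaps transforming `(G, I)` into `(G, J)` such that at every
intermediate step the non-matching part of the realization equals `G`. -/
theorem kswap_sequence_fixed_G {n : ℕ} (π : Fin n → ℕ)
    (hgraphic : IsGraphic π)
    (hΔ : ∀ i, 24 * π i ≤ n)
    (hplus : IsGraphic (fun i => π i + 1))
    (G I J : SimpleGraph (Fin n))
    (h₁ : KunduState π (G, I)) (h₂ : KunduState π (G, J)) :
    ∃ (m : ℕ) (f : ℕ → SimpleGraph (Fin n) × SimpleGraph (Fin n)),
      f 0 = (G, I) ∧ f m = (G, J) ∧
      (∀ k < m, KSwap (f k) (f (k + 1))) ∧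
      (∀ k ≤ m, KunduState π (f k)) ∧
      (∀ k ≤ m, (f k).1 = G) :=
  kswap_sequence_fixed_G_general π hΔ G I J h₁ h₂
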